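/- Let g be a convex C¹ function on an open convex set D ⊂ ℝ^m and let a ∈ D. Then there exist constants b > 0, c > 0, d > 0 such that for all x ∈ D: ⟨∇g(x), x − a⟩ ≥ b·‖∇g(x)‖ − c·‖x − a‖ − d. -/

import Mathlib

/-!
Take `ε > 0` such that `g ≤ r` on the closed ball `B(a, ε) ⊆ D` (continuity of `g` at `a`), and
for `x ∈ D` pick `u` with `‖u‖ ≤ ε` and `⟪∇g(x), u⟫ = ε‖∇g(x)‖`. The first-order convexity
inequality at `x` towards `a + u` gives `ε‖∇g(x)‖ - ⟪∇g(x), x - a⟫ ≤ g(a + u) - g(x) ≤ r - g(x)`,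
and the one at `a` towards `x` bounds `g(x)` from below by `g(a) - ‖∇g(a)‖‖x - a‖`.
-/

open RealInnerProductSpace

theorem ContinuousAt.exists_closedBall_subset_and_lt {X : Type*} [PseudoMetricSpace X]
    {D : Set X} {f : X → ℝ} {a : X} {r : ℝ} (hf : ContinuousAt f a) (hD : IsOpen D)
    (ha : a ∈ D) (hr : f a < r) :
    ∃ ε > 0, Metric.closedBall a ε ⊆ D ∧ ∀ y ∈ Metric.closedBall a ε, f y < r := by
  have := (hD.eventually_mem ha).and (hf.eventually (gt_mem_nhds hr))
  obtain ⟨ε, hε, hball⟩ := Metric.nhds_basis_closedBall.eventually_iff.mp this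
  exact ⟨ε, hε, fun y hy ↦ (hball hy).1, fun y hy ↦ (hball hy).2⟩

theorem ConvexOn.apply_sub_le_of_hasFDerivAt {E : Type*} [NormedAddCommGroup E] [NormedSpace ℝ E]
    {D : Set E} {f : E → ℝ} {f' : E →L[ℝ] ℝ} {x y : E} (hf : ConvexOn ℝ D f)
    (hx : x ∈ D) (hy : y ∈ D) (hfx : HasFDerivAt f f' x) :
    f' (y - x) ≤ f y - f x := by
  have hline : ConvexOn ℝ (Set.Icc 0 1) (f ∘ AffineMap.lineMap (k := ℝ) x y) :=
    (hf.comp_affineMap _).subset (fun _ ht ↦ hf.1.lineMap_mem hx hy ht) (convex_Icc 0 1)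
  have hderiv : HasDerivAt (f ∘ AffineMap.lineMap (k := ℝ) x y) (f' (y - x)) 0 :=
    hfx.comp_hasDerivAt_of_eq 0 AffineMap.hasDerivAt_lineMap
      (AffineMap.lineMap_apply_zero x y).symm
  simpa [slope] using hline.le_slope_of_hasDerivAt (by simp) (by simp) one_pos hderiv

section InnerProductSpace

variable {E : Type*} [NormedAddCommGroup E] [InnerProductSpace ℝ E]

theorem exists_norm_le_inner_eq (v : E) {ε : ℝ} (hε : 0 ≤ ε) :
    ∃ u : E, ‖u‖ ≤ ε ∧ ⟪v, u⟫ = ε * ‖v‖ := by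
  rcases eq_or_ne v 0 with rfl | hv
  · exact ⟨0, by simpa using hε, by simp⟩
  have hv' : 0 < ‖v‖ := norm_pos_iff.mpr hv
  refine ⟨(ε / ‖v‖) • v, ?_, ?_⟩
  · rw [norm_smul, Real.norm_of_nonneg (by positivity), div_mul_cancel₀ _ hv'.ne']
  · rw [real_inner_smul_right, real_inner_self_eq_norm_sq]
    field_simp

variable [CompleteSpace E] {D : Set E} {g : E → ℝ}

theorem ConvexOn.inner_gradient_le_sub {g'x x y : E} (hg : ConvexOn ℝ D g) (hx : x ∈ D)
    (hy : y ∈ D) (hgx : HasGradientAt g g'x x) :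
    ⟪g'x, y - x⟫ ≤ g y - g x :=
  hg.apply_sub_le_of_hasFDerivAt hx hy hgx.hasFDerivAt

theorem ConvexOn.le_inner_gradient_sub {g' : E → E} {a x : E} {ε r : ℝ} (hg : ConvexOn ℝ D g)
    (hdiff : ∀ x ∈ D, HasGradientAt g (g' x) x) (ha : a ∈ D) (hε : 0 ≤ ε)
    (hball : Metric.closedBall a ε ⊆ D) (hbound : ∀ y ∈ Metric.closedBall a ε, g y < r)
    (hx : x ∈ D) :
    ε * ‖g' x‖ - ‖g' a‖ * ‖x - a‖ - (r - g a) ≤ ⟪g' x, x - a⟫ := by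
  obtain ⟨u, hu, hinner⟩ := exists_norm_le_inner_eq (g' x) hε
  have hy : a + u ∈ Metric.closedBall a ε := by simpa [dist_eq_norm] using hu
  have hxy := hg.inner_gradient_le_sub hx (hball hy) (hdiff x hx)
  have hax := hg.inner_gradient_le_sub ha hx (hdiff a ha)
  have hcs := neg_le_of_abs_le (abs_real_inner_le_norm (g' a) (x - a))
  rw [show a + u - x = u - (x - a) by abel, inner_sub_right, hinner] at hxy
  linarith [hbound _ hy]

end InnerProductSpace

theorem stmt_16_general (m : ℕ) (D : Set (EuclideanSpace ℝ (Fin m)))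
    (hD : IsOpen D)
    (g : EuclideanSpace ℝ (Fin m) → ℝ) (g' : EuclideanSpace ℝ (Fin m) → EuclideanSpace ℝ (Fin m))
    (hconv : ConvexOn ℝ D g)
    (hdiff : ∀ x ∈ D, HasGradientAt g (g' x) x)
    (a : EuclideanSpace ℝ (Fin m)) (ha : a ∈ D) :
    ∃ b > (0 : ℝ), ∃ c > (0 : ℝ), ∃ d > (0 : ℝ), ∀ x ∈ D,
      b * ‖g' x‖ - c * ‖x - a‖ - d ≤ ⟪g' x, x - a⟫ := by
  obtain ⟨ε, hε, hball, hbound⟩ := (hdiff a ha).differentiableAt.continuousAt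
    |>.exists_closedBall_subset_and_lt hD ha (lt_add_one (g a))
  refine ⟨ε, hε, ‖g' a‖ + 1, by positivity, 1, one_pos, fun x hx ↦ ?_⟩
  have key := hconv.le_inner_gradient_sub hdiff ha hε.le hball hbound hx
  linarith [norm_nonneg (x - a)]

/-- Cépa–Lépingle inequality: for a convex C¹ function g on an open convex set D
and a ∈ D, there are b, c, d > 0 with ⟨∇g(x), x − a⟩ ≥ b‖∇g(x)‖ − c‖x − a‖ − d on D. -/
theorem stmt_16 (m : ℕ) (D : Set (EuclideanSpace ℝ (Fin m)))
    (hD : IsOpen D) (hDconv : Convex ℝ D)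
    (g : EuclideanSpace ℝ (Fin m) → ℝ) (g' : EuclideanSpace ℝ (Fin m) → EuclideanSpace ℝ (Fin m))
    (hconv : ConvexOn ℝ D g)
    (hdiff : ∀ x ∈ D, HasGradientAt g (g' x) x)
    (hcont : ContinuousOn g' D)
    (a : EuclideanSpace ℝ (Fin m)) (ha : a ∈ D) :
    ∃ b > (0 : ℝ), ∃ c > (0 : ℝ), ∃ d > (0 : ℝ), ∀ x ∈ D,
      b * ‖g' x‖ - c * ‖x - a‖ - d ≤ ⟪g' x, x - a⟫ :=
  stmt_16_general m D hD g g' hconv hdiff a ha
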